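/- arXiv:2103.05097 — 2 statements merged into one kernel-verified Lean document; each statement's English description precedes it below -/
import Mathlib

section
/- Let X be a real Banach space of dimension greater than 1. Then add(X) = ℵ₁. -/
/-! Countably many countable covers by hyperplanes form one countable cover, so add(X) ≥ ℵ₁.
Conversely, a hyperplane is a Banach space, so by Baire's theorem it cannot be covered by
countably many hyperplanes unless it lies in, hence equals, one of them; hence a family of hyperplanes whose union
lies in H_σ(X) is countable. Since dim X > 1, two independent functionals f, g give the pencil
of hyperplanes ker (f + t g), t ∈ ℝ, and any ℵ₁ of them have a union outside H_σ(X). -/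

open Cardinal Set

universe u v

noncomputable section

/-- A hyperplane of a normed space: the kernel of a nonzero continuous linear functional. -/
def IsHyperplane {X : Type u} [NormedAddCommGroup X] [NormedSpace ℝ X] (H : Set X) : Prop :=
  ∃ f : X →L[ℝ] ℝ, f ≠ 0 ∧ H = {x | f x = 0}

/-- Member of the σ-ideal generated by hyperplanes: covered by countably many hyperplanes. -/
def InHyperplaneIdeal {X : Type u} [NormedAddCommGroup X] [NormedSpace ℝ X] (Y : Set X) : Prop :=
  ∃ F : Set (Set X), F.Countable ∧ (∀ H ∈ F, IsHyperplane H) ∧ Y ⊆ ⋃₀ F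

/-- Additivity of the hyperplane σ-ideal. -/
def addH (X : Type u) [NormedAddCommGroup X] [NormedSpace ℝ X] : Cardinal.{u} :=
  sInf {c | ∃ F : Set (Set X), (∀ A ∈ F, InHyperplaneIdeal A) ∧
    ¬ InHyperplaneIdeal (⋃₀ F) ∧ #F = c}

/-- Covering number of the hyperplane σ-ideal. -/
def covH (X : Type u) [NormedAddCommGroup X] [NormedSpace ℝ X] : Cardinal.{u} :=
  sInf {c | ∃ F : Set (Set X), (∀ A ∈ F, InHyperplaneIdeal A) ∧ ⋃₀ F = Set.univ ∧ #F = c}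

/-- Uniformity of the hyperplane σ-ideal. -/
def nonH (X : Type u) [NormedAddCommGroup X] [NormedSpace ℝ X] : Cardinal.{u} :=
  sInf {c | ∃ Y : Set X, ¬ InHyperplaneIdeal Y ∧ #Y = c}

/-- Cofinality of the hyperplane σ-ideal. -/
def cofH (X : Type u) [NormedAddCommGroup X] [NormedSpace ℝ X] : Cardinal.{u} :=
  sInf {c | ∃ F : Set (Set X), (∀ A ∈ F, InHyperplaneIdeal A) ∧
    (∀ Y : Set X, InHyperplaneIdeal Y → ∃ A ∈ F, Y ⊆ A) ∧ #F = c}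

/-- Density of a topological space: least cardinality of a dense subset. -/
def densH (X : Type u) [TopologicalSpace X] : Cardinal.{u} :=
  sInf {c | ∃ D : Set X, Dense D ∧ #D = c}

/-- `cf([κ]^ω)`: least cardinality of a cofinal family of countable subsets of κ. -/
def cfCtblSubsets (κ : Cardinal.{u}) : Cardinal.{u} :=
  sInf {c | ∃ F : Set (Set κ.out), (∀ S ∈ F, S.Countable) ∧
    (∀ S : Set κ.out, S.Countable → ∃ T ∈ F, S ⊆ T) ∧ #F = c}

/-- A compact space has small diagonal. -/
def HasSmallDiagonal (K : Type u) [TopologicalSpace K] : Prop :=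
  ∀ A : Set (K × K), #A = Cardinal.aleph 1 → A ∩ Set.diagonal K = ∅ →
    ∃ B ⊆ A, ¬ B.Countable ∧ closure B ∩ Set.diagonal K = ∅

/-- A topological space is scattered. -/
def IsScattered (K : Type u) [TopologicalSpace K] : Prop :=
  ∀ S : Set K, S.Nonempty → ∃ x ∈ S, ∃ U : Set K, IsOpen U ∧ U ∩ S = {x}

open Filter Topology

theorem Submodule.exists_eq_top_of_iUnion_eq_univ {R M ι : Type*} [Ring R] [TopologicalSpace R]
    [TopologicalSpace M] [AddCommGroup M] [ContinuousAdd M] [Module R M] [ContinuousSMul R M]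
    [NeBot (𝓝[{x : R | IsUnit x}] 0)] [BaireSpace M] [Countable ι] {S : ι → Submodule R M}
    (hS : ∀ i, IsClosed (S i : Set M)) (hcov : ⋃ i, (S i : Set M) = Set.univ) : ∃ i, S i = ⊤ := by
  obtain ⟨i, hi⟩ := nonempty_interior_of_iUnion_of_closed hS hcov
  exact ⟨i, (S i).eq_top_of_nonempty_interior' hi⟩

theorem Submodule.exists_le_of_subset_iUnion {𝕜 E ι : Type*} [NontriviallyNormedField 𝕜]
    [NormedAddCommGroup E] [NormedSpace 𝕜 E] [CompleteSpace E] [Countable ι]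
    {K : Submodule 𝕜 E} (hK : IsClosed (K : Set E)) {S : ι → Submodule 𝕜 E}
    (hS : ∀ i, IsClosed (S i : Set E)) (hcov : (K : Set E) ⊆ ⋃ i, S i) : ∃ i, K ≤ S i := by
  have : CompleteSpace K := hK.completeSpace_coe
  simp_rw [← Submodule.comap_subtype_eq_top]
  refine exists_eq_top_of_iUnion_eq_univ (fun i ↦ (hS i).preimage continuous_subtype_val) ?_
  exact eq_univ_of_forall fun x : K ↦ by simpa using hcov x.2

theorem LinearMap.ker_eq_of_ker_le {K M : Type*} [DivisionRing K] [AddCommGroup M] [Module K M]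
    {f g : M →ₗ[K] K} (hf : f ≠ 0) (hg : g ≠ 0) (h : ker f ≤ ker g) : ker g = ker f :=
  ((isCoatom_ker_of_surjective (surjective_of_ne_zero hf)).le_iff_eq (ker_eq_top.not.mpr hg)).mp h

theorem SeparatingDual.exists_dual_pair {R V : Type*} [Field R] [TopologicalSpace R]
    [IsTopologicalRing R] [AddCommGroup V] [TopologicalSpace V] [Module R V] [SeparatingDual R V]
    (hV : 1 < Module.rank R V) :
    ∃ (f g : StrongDual R V) (x y : V), f x = 1 ∧ f y = 0 ∧ g x = 0 ∧ g y = 1 := by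
  have : Nontrivial V := rank_pos_iff_nontrivial.mp (zero_lt_one.trans hV)
  obtain ⟨x, hx⟩ := exists_ne (0 : V)
  obtain ⟨z, hxz⟩ := exists_linearIndependent_pair_of_one_lt_rank hV hx
  obtain ⟨f, hfx⟩ := exists_eq_one (R := R) hx
  have hy : z - f z • x ≠ 0 := by
    intro h
    have := LinearIndependent.pair_iff.mp hxz (-f z) 1 (by rw [← h]; module)
    exact one_ne_zero this.2
  obtain ⟨g, hgy⟩ := exists_eq_one (R := R) hy
  refine ⟨f, g, x - g x • (z - f z • x), z - f z • x, ?_, ?_, ?_, hgy⟩ <;> simp [hfx, hgy]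

section Hyperplane

variable {X : Type u} [NormedAddCommGroup X] [NormedSpace ℝ X]

theorem IsHyperplane.inHyperplaneIdeal {H : Set X} (hH : IsHyperplane H) :
    InHyperplaneIdeal H :=
  ⟨{H}, countable_singleton H, by simpa using hH, by simp⟩

theorem InHyperplaneIdeal.sUnion {F : Set (Set X)} (hc : F.Countable)
    (h : ∀ A ∈ F, InHyperplaneIdeal A) : InHyperplaneIdeal (⋃₀ F) := by
  choose! G hGc hGH hGcov using h
  refine ⟨⋃ A ∈ F, G A, hc.biUnion hGc, ?_, ?_⟩
  · simp only [mem_iUnion₂]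
    rintro H ⟨A, hA, hH⟩
    exact hGH A hA H hH
  · exact sUnion_subset fun A hA ↦ (hGcov A hA).trans (sUnion_mono (subset_biUnion_of_mem hA))

theorem IsHyperplane.mem_of_subset_sUnion [CompleteSpace X] {H : Set X} (hH : IsHyperplane H)
    {G : Set (Set X)} (hGc : G.Countable) (hG : ∀ H' ∈ G, IsHyperplane H') (hcov : H ⊆ ⋃₀ G) :
    H ∈ G := by
  obtain ⟨f, hf, rfl⟩ := hH
  have : Countable G := hGc.to_subtype
  choose g hg hgG using fun H' : G ↦ hG H' H'.2
  obtain ⟨H', hle⟩ := Submodule.exists_le_of_subset_iUnion f.isClosed_ker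
    (fun H' ↦ (g H').isClosed_ker) fun x hx ↦ by
      obtain ⟨H', hH', hxH'⟩ := hcov hx
      exact mem_iUnion.mpr ⟨⟨H', hH'⟩, (hgG ⟨H', hH'⟩).subset hxH'⟩
  have hker := LinearMap.ker_eq_of_ker_le (f := (f : X →ₗ[ℝ] ℝ)) (g := (g H' : X →ₗ[ℝ] ℝ))
    (ContinuousLinearMap.coe_injective.ne hf) (ContinuousLinearMap.coe_injective.ne (hg H')) hle
  convert H'.2
  rw [hgG H']
  exact congrArg SetLike.coe hker.symm

theorem InHyperplaneIdeal.countable_of_sUnion [CompleteSpace X] {F : Set (Set X)}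
    (hF : ∀ H ∈ F, IsHyperplane H) (h : InHyperplaneIdeal (⋃₀ F)) : F.Countable := by
  obtain ⟨G, hGc, hG, hcov⟩ := h
  exact hGc.mono fun H hH ↦
    (hF H hH).mem_of_subset_sUnion hGc hG ((subset_sUnion_of_mem hH).trans hcov)

theorem continuum_le_mk_setOf_isHyperplane (hX : 1 < Module.rank ℝ X) :
    𝔠 ≤ #{H : Set X | IsHyperplane H} := by
  obtain ⟨f, g, x, y, hfx, hfy, hgx, hgy⟩ := SeparatingDual.exists_dual_pair hX
  have hne : ∀ t : ℝ, f + t • g ≠ 0 := fun t h ↦ by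
    simpa [hfx, hgx] using DFunLike.congr_fun h x
  have hval : ∀ s t : ℝ, (f + s • g) (y - t • x) = s - t := fun s t ↦ by
    simp [hfx, hfy, hgx, hgy, neg_add_eq_sub]
  let pencil : ℝ → {H : Set X | IsHyperplane H} := fun t ↦ ⟨_, f + t • g, hne t, rfl⟩
  have hpencil : Function.Injective pencil := fun s t hst ↦ by
    have hmem : y - t • x ∈ (pencil s : Set X) := by
      rw [hst]
      exact (hval t t).trans (sub_self t)
    exact sub_eq_zero.mp ((hval s t).symm.trans hmem)
  simpa [mk_real] using lift_mk_le_lift_mk_of_injective hpencil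

end Hyperplane

/-- add(X) = ℵ₁ for any Banach space of dimension > 1. -/
theorem stmt3 (X : Type u) [NormedAddCommGroup X] [NormedSpace ℝ X] [CompleteSpace X]
    (hdim : 1 < Module.rank ℝ X) :
    addH X = Cardinal.aleph 1 := by
  obtain ⟨F, hFH, hF⟩ := le_mk_iff_exists_subset.mp
    (aleph_one_le_continuum.trans (continuum_le_mk_setOf_isHyperplane hdim))
  have hmem : ℵ₁ ∈ {c | ∃ F : Set (Set X), (∀ A ∈ F, InHyperplaneIdeal A) ∧
      ¬ InHyperplaneIdeal (⋃₀ F) ∧ #F = c} := by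
    refine ⟨F, fun H hH ↦ (hFH hH).inHyperplaneIdeal, fun h ↦ ?_, hF⟩
    exact (le_aleph0_iff_set_countable.mpr (h.countable_of_sUnion hFH)).not_gt
      (hF ▸ aleph0_lt_aleph_one)
  refine le_antisymm (csInf_le' hmem) (le_csInf ⟨_, hmem⟩ ?_)
  rintro _ ⟨F', hF', hunion, rfl⟩
  by_contra hlt
  exact hunion (.sUnion (le_aleph0_iff_set_countable.mp (lt_aleph_one_iff.mp (not_le.mp hlt))) hF')

end
end

section
/- Let X be a real Banach space of dimension greater than 1. Then dens(X) ≤ non(X); if dens(X) is uncountable then non(X) ≤ cf([dens(X)]^ω); and if the cofinality of dens(X) is ω, then dens(X) < non(X). -/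
/-!
A set `Y` with `ℵ₀ < #Y < dens X` has a proper closed span (otherwise the spans of its finite
subsets, each separable, would give a dense set of size `#Y`), and a countable set lies on
countably many lines; closed proper subspaces lie in hyperplanes by Hahn–Banach. Hence
`dens X ≤ non X`, and if `cf (dens X) = ω`, a set of size `dens X` is a countable union of smaller
sets and cannot witness `non X`. For the upper bound, take a dense set `D` and a cofinal family of
countable subsets of `D`. To each member `{aₙ}` attach the entire curve
`t ↦ ∑ tⁿ aₙ / (n! (1 + ‖aₙ‖))`; a functional not vanishing on `{aₙ}` composes with it to a
nonzero real-analytic function, which has countably many zeros. Countably many hyperplanes have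
functionals that are all nonzero on one member of the family, so they miss a point among any
`ℵ₁` points of its curve.
-/

open Cardinal Set

universe u v

noncomputable section

open scoped Nat

theorem AnalyticOnNhd.countable_setOf_eq_zero {𝕜 E : Type*} [NontriviallyNormedField 𝕜]
    [SecondCountableTopology 𝕜] [PreconnectedSpace 𝕜] [NormedAddCommGroup E] [NormedSpace 𝕜 E]
    {f : 𝕜 → E} (hf : AnalyticOnNhd 𝕜 f univ) (h : ∃ z, f z ≠ 0) : {z | f z = 0}.Countable := by
  obtain ⟨z, hz⟩ := h
  rcases hf.eqOn_zero_or_eventually_ne_zero_of_preconnected isPreconnected_univ with h0 | h0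
  · exact absurd (h0 (mem_univ z)) hz
  · simpa using (HereditarilyLindelofSpace.isLindelof _).countable_of_isDiscrete
      (isDiscrete_of_codiscreteWithin (s := {z | f z = 0}) h0)

theorem Cardinal.exists_iUnion_eq_univ_mk_lt_of_cof_eq_aleph0 {α : Type u}
    (h : (#α).ord.cof = ℵ₀) : ∃ A : ℕ → Set α, ⋃ n, A n = Set.univ ∧ ∀ n, #(A n) < #α := by
  obtain ⟨s, hs, hsc⟩ := Order.exists_cof_eq (#α).ord.ToType
  rw [Ordinal.cof_toType, h] at hsc
  obtain ⟨b, rfl⟩ : ∃ b : ℕ → (#α).ord.ToType, s = range b :=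
    (le_aleph0_iff_set_countable.1 hsc.le).exists_eq_range
      (nonempty_coe_sort.1 (mk_ne_zero_iff.1 (hsc ▸ aleph0_ne_zero)))
  obtain ⟨e⟩ : Nonempty (α ≃ (#α).ord.ToType) := Cardinal.eq.1 (mk_ord_toType _).symm
  have hα : ℵ₀ ≤ #α := h ▸ Ordinal.cof_ord_le _
  refine ⟨fun n => e ⁻¹' Iic (b n), ?_, fun n => ?_⟩
  · refine eq_univ_of_forall fun x => ?_
    obtain ⟨_, ⟨n, rfl⟩, hn⟩ := hs (e x)
    exact mem_iUnion.2 ⟨n, hn⟩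
  · have hIio : #(Iio (b n)) < #α := by simpa using mk_Iio_lt (b n)
    rw [mk_preimage_equiv, ← Iio_insert]
    exact mk_insert_le.trans_lt (add_lt_of_lt hα hIio (one_lt_aleph0.trans_le hα))

section Density

variable {X : Type u} [TopologicalSpace X]

theorem densH_le_mk_of_dense {D : Set X} (hD : Dense D) : densH X ≤ #D :=
  csInf_le' ⟨D, hD, rfl⟩

theorem exists_dense_mk_eq_densH : ∃ D : Set X, Dense D ∧ #D = densH X :=
  csInf_mem (⟨_, univ, dense_univ, rfl⟩ : {c | ∃ D : Set X, Dense D ∧ #D = c}.Nonempty)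

end Density

theorem Cardinal.mk_finset_le_max (α : Type u) : #(Finset α) ≤ max ℵ₀ #α := by
  classical
  exact (mk_le_of_surjective fun s : Finset α => ⟨s.toList, s.toList_toFinset⟩).trans
    (mk_list_le_max α)

theorem densH_le_max_of_dense_span {X : Type u} [NormedAddCommGroup X] [NormedSpace ℝ X]
    {Y : Set X} (hY : Dense (Submodule.span ℝ Y : Set X)) : densH X ≤ max ℵ₀ #Y := by
  classical
  have hsep (T : Finset Y) : TopologicalSpace.IsSeparable
      (Submodule.span ℝ (Subtype.val '' (T : Set Y)) : Set X) :=
    (T.finite_toSet.image _).isSeparable.span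
  choose C hCc hC using hsep
  have hspan : (Submodule.span ℝ Y : Set X) ⊆ closure (⋃ T, C T) := by
    intro x hx
    obtain ⟨T, hTY, hxT⟩ := Submodule.mem_span_finite_of_mem_span hx
    have hT : Subtype.val '' ((T.subtype (· ∈ Y) : Finset Y) : Set Y) = T := by
      ext z
      simpa using fun hz : z ∈ T => hTY hz
    exact closure_mono (subset_iUnion C _) (hC _ (by rwa [hT]))
  calc densH X ≤ #(⋃ T, C T) := densH_le_mk_of_dense (dense_closure.1 (hY.mono hspan))
    _ ≤ #(Finset Y) * ⨆ T, #(C T) := mk_iUnion_le C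
    _ ≤ max ℵ₀ #Y * max ℵ₀ #Y :=
      mul_le_mul' (mk_finset_le_max Y)
        (ciSup_le' fun T => (hCc T).le_aleph0.trans (le_max_left _ _))
    _ = max ℵ₀ #Y := mul_eq_self (le_max_left _ _)

section HyperplaneIdeal

variable {X : Type u} [NormedAddCommGroup X] [NormedSpace ℝ X]

theorem InHyperplaneIdeal.mono {Y Z : Set X} (hZ : InHyperplaneIdeal Z) (h : Y ⊆ Z) :
    InHyperplaneIdeal Y :=
  let ⟨F, hFc, hFH, hZF⟩ := hZ
  ⟨F, hFc, hFH, h.trans hZF⟩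

theorem inHyperplaneIdeal_iUnion {ι : Type*} [Countable ι] {A : ι → Set X}
    (h : ∀ i, InHyperplaneIdeal (A i)) : InHyperplaneIdeal (⋃ i, A i) := by
  choose F hFc hFH hAF using h
  refine ⟨⋃ i, F i, countable_iUnion hFc, fun H hH => ?_, iUnion_subset fun i => ?_⟩
  · obtain ⟨i, hi⟩ := mem_iUnion.1 hH
    exact hFH i H hi
  · exact (hAF i).trans (sUnion_mono (subset_iUnion F i))

theorem Submodule.exists_isHyperplane_superset (M : Submodule ℝ X) (hM : IsClosed (M : Set X))
    (hMtop : M ≠ ⊤) : ∃ H : Set X, IsHyperplane H ∧ (M : Set X) ⊆ H := by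
  -- an instance argument: it makes `X ⧸ M` a Hausdorff normed space
  have := hM
  obtain ⟨x, hx⟩ : ∃ x, x ∉ M := by simpa [Submodule.eq_top_iff'] using hMtop
  obtain ⟨g, hg⟩ := SeparatingDual.exists_ne_zero (R := ℝ)
    (x := Submodule.Quotient.mk (p := M) x) (by simpa [Submodule.Quotient.mk_eq_zero] using hx)
  refine ⟨_, ⟨g ∘L M.mkQL, fun h => hg (by simpa using congr($h x)), rfl⟩, fun y hy => ?_⟩
  simp [(Submodule.Quotient.mk_eq_zero M).2 hy]

theorem inHyperplaneIdeal_of_subset_submodule {Y : Set X} (M : Submodule ℝ X)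
    (hM : IsClosed (M : Set X)) (hMtop : M ≠ ⊤) (hY : Y ⊆ M) : InHyperplaneIdeal Y := by
  obtain ⟨H, hH, hMH⟩ := M.exists_isHyperplane_superset hM hMtop
  exact ⟨{H}, countable_singleton H, by simpa using hH, by simpa using hY.trans hMH⟩

theorem inHyperplaneIdeal_of_countable (hdim : 1 < Module.rank ℝ X) {Y : Set X}
    (hY : Y.Countable) : InHyperplaneIdeal Y := by
  have hpoint (y : Y) : InHyperplaneIdeal ({(y : X)} : Set X) := by
    refine inHyperplaneIdeal_of_subset_submodule (Submodule.span ℝ {(y : X)})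
      (Submodule.closed_of_finiteDimensional _) (fun htop => ?_) Submodule.subset_span
    have hrank := rank_span_le (R := ℝ) ({(y : X)} : Set X)
    rw [htop, rank_top, mk_singleton] at hrank
    exact hrank.not_gt hdim
  have := hY.to_subtype
  exact (inHyperplaneIdeal_iUnion hpoint).mono fun y hy => mem_iUnion.2 ⟨⟨y, hy⟩, rfl⟩

theorem inHyperplaneIdeal_of_mk_lt_densH (hdim : 1 < Module.rank ℝ X) {Y : Set X}
    (hY : #Y < densH X) : InHyperplaneIdeal Y := by
  by_cases hc : Y.Countable
  · exact inHyperplaneIdeal_of_countable hdim hc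
  refine inHyperplaneIdeal_of_subset_submodule _ (Submodule.isClosed_topologicalClosure _)
    (fun htop => hY.not_ge ?_)
    ((Submodule.subset_span).trans (Submodule.le_topologicalClosure _))
  have hYinf : ℵ₀ ≤ #Y := (not_le.1 (mt le_aleph0_iff_set_countable.1 hc)).le
  simpa [hYinf] using
    densH_le_max_of_dense_span (Submodule.dense_iff_topologicalClosure_eq_top.2 htop)

theorem nonH_le_mk {Y : Set X} (hY : ¬ InHyperplaneIdeal Y) : nonH X ≤ #Y :=
  csInf_le' ⟨Y, hY, rfl⟩

theorem IsHyperplane.exists_mem_not_mem_of_dense {H D : Set X} (hH : IsHyperplane H)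
    (hD : Dense D) : ∃ d ∈ D, d ∉ H := by
  obtain ⟨f, hf, rfl⟩ := hH
  obtain ⟨x, hx⟩ := DFunLike.ne_iff.1 hf
  exact hD.exists_mem_open (isOpen_ne_fun f.continuous continuous_const) ⟨x, hx⟩

end HyperplaneIdeal

section Curve

variable {X : Type u} [NormedAddCommGroup X] [NormedSpace ℝ X]

def curveSeries (a : ℕ → X) : FormalMultilinearSeries ℝ ℝ X :=
  fun n => ContinuousMultilinearMap.mkPiRing ℝ (Fin n) ((n ! * (1 + ‖a n‖))⁻¹ • a n)

theorem norm_curveSeries_le (a : ℕ → X) (n : ℕ) : ‖curveSeries a n‖ ≤ (n ! : ℝ)⁻¹ := by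
  rw [curveSeries, ContinuousMultilinearMap.norm_mkPiRing, norm_smul, norm_inv,
    Real.norm_of_nonneg (by positivity), mul_inv, mul_assoc]
  refine mul_le_of_le_one_right (by positivity) ?_
  rw [inv_mul_le_iff₀ (by positivity)]
  linarith

theorem curveSeries_radius (a : ℕ → X) : (curveSeries a).radius = ⊤ := by
  refine (curveSeries a).radius_eq_top_of_summable_norm fun r =>
    (Real.summable_pow_div_factorial r).of_nonneg_of_le
      (fun n => mul_nonneg (norm_nonneg _) (by positivity)) fun n => ?_
  rw [div_eq_mul_inv, mul_comm]
  exact mul_le_mul_of_nonneg_left (norm_curveSeries_le a n) (by positivity)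

variable [CompleteSpace X]

def curve (a : ℕ → X) : ℝ → X := (curveSeries a).sum

theorem hasFPowerSeriesOnBall_curve (a : ℕ → X) :
    HasFPowerSeriesOnBall (curve a) (curveSeries a) 0 ⊤ := by
  simpa [curve, curveSeries_radius] using
    (curveSeries a).hasFPowerSeriesOnBall (by simp [curveSeries_radius])

theorem IsHyperplane.countable_setOf_curve_mem {H : Set X} (hH : IsHyperplane H) {a : ℕ → X}
    (ha : ∃ n, a n ∉ H) : {t | curve a t ∈ H}.Countable := by
  obtain ⟨f, -, rfl⟩ := hH
  obtain ⟨n, hn⟩ := ha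
  have hf := f.comp_hasFPowerSeriesOnBall (hasFPowerSeriesOnBall_curve a)
  have hana := hf.analyticOnNhd
  rw [Metric.eball_top] at hana
  refine AnalyticOnNhd.countable_setOf_eq_zero hana ?_
  by_contra! hzero
  have hcoeff := congr($(hf.hasFPowerSeriesAt.eq_zero_of_eventually
    (Filter.Eventually.of_forall hzero)) n fun _ => 1)
  have hpos : (1 + ‖a n‖ : ℝ) ≠ 0 := by positivity
  exact hn (by simpa [curveSeries, hpos, Nat.factorial_ne_zero] using hcoeff)

end Curve

theorem exists_countable_cofinal_family_mk_le {β : Type u} (D : Set β) :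
    ∃ 𝓕 : Set (Set β), (∀ T ∈ 𝓕, T.Countable) ∧
      (∀ S ⊆ D, S.Countable → ∃ T ∈ 𝓕, S ⊆ T) ∧ #𝓕 ≤ cfCtblSubsets #D := by
  obtain ⟨F, hFc, hF, hFcard⟩ : ∃ F : Set (Set (#D).out), (∀ S ∈ F, S.Countable) ∧
      (∀ S : Set (#D).out, S.Countable → ∃ T ∈ F, S ⊆ T) ∧ #F = cfCtblSubsets #D :=
    csInf_mem (⟨_, {S | S.Countable}, fun S hS => hS, fun S hS => ⟨S, hS, subset_rfl⟩, rfl⟩ :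
      {c | ∃ F : Set (Set (#D).out), (∀ S ∈ F, S.Countable) ∧
        (∀ S : Set (#D).out, S.Countable → ∃ T ∈ F, S ⊆ T) ∧ #F = c}.Nonempty)
  set g : (#D).out → β := Subtype.val ∘ outMkEquiv
  have hg : g.Injective := Subtype.val_injective.comp outMkEquiv.injective
  have hgD : range g = D := by simp [g, range_comp, outMkEquiv.range_eq_univ]
  refine ⟨image g '' F, ?_, fun S hSD hS => ?_, hFcard ▸ mk_image_le⟩
  · rintro _ ⟨T, hT, rfl⟩
    exact (hFc T hT).image g
  · obtain ⟨T, hT, hST⟩ := hF (g ⁻¹' S) (hS.preimage hg)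
    refine ⟨g '' T, mem_image_of_mem _ hT, fun x hx => ?_⟩
    obtain ⟨y, rfl⟩ := hgD.symm ▸ hSD hx
    exact mem_image_of_mem g (hST hx)

theorem aleph0_lt_mk_of_cofinal {β : Type u} {D : Set β} (hD : ¬ D.Countable)
    {𝓕 : Set (Set β)} (h𝓕c : ∀ T ∈ 𝓕, T.Countable)
    (h𝓕 : ∀ S ⊆ D, S.Countable → ∃ T ∈ 𝓕, S ⊆ T) : ℵ₀ < #𝓕 := by
  refine not_le.1 fun hle => hD (((le_aleph0_iff_set_countable.1 hle).sUnion h𝓕c).mono ?_)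
  intro x hx
  obtain ⟨T, hT, hxT⟩ := h𝓕 {x} (singleton_subset_iff.2 hx) (countable_singleton x)
  exact ⟨T, hT, hxT rfl⟩

section NonH

variable {X : Type u} [NormedAddCommGroup X] [NormedSpace ℝ X] [CompleteSpace X]

theorem exists_not_inHyperplaneIdeal_mk_le {D : Set X} (hD : Dense D) {𝓕 : Set (Set X)}
    (h𝓕c : ∀ T ∈ 𝓕, T.Countable) (h𝓕 : ∀ S ⊆ D, S.Countable → ∃ T ∈ 𝓕, S ⊆ T) :
    ∃ Y : Set X, ¬ InHyperplaneIdeal Y ∧ #Y ≤ #𝓕 * ℵ₁ := by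
  obtain ⟨W, hW⟩ : ∃ W : Set ℝ, #W = ℵ₁ :=
    le_mk_iff_exists_set.1 (mk_real ▸ aleph_one_le_continuum)
  have hWu : ¬ W.Countable := by
    rw [← le_aleph0_iff_set_countable, hW]
    exact aleph0_lt_aleph_one.not_ge
  choose! a ha using fun T (hT : T ∈ 𝓕) => countable_iff_exists_subset_range.1 (h𝓕c T hT)
  refine ⟨⋃ T ∈ 𝓕, curve (a T) '' W, ?_, ?_⟩
  · rintro ⟨G, hGc, hGH, hYG⟩
    choose! d hdD hdH using fun H (hH : H ∈ G) => (hGH H hH).exists_mem_not_mem_of_dense hD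
    obtain ⟨T, hT, hdT⟩ := h𝓕 (d '' G) (image_subset_iff.2 hdD) (hGc.image d)
    have hzeros (H : Set X) (hH : H ∈ G) : {t | curve (a T) t ∈ H}.Countable := by
      refine (hGH H hH).countable_setOf_curve_mem ?_
      obtain ⟨n, hn⟩ := ha T hT (hdT (mem_image_of_mem d hH))
      exact ⟨n, hn ▸ hdH H hH⟩
    obtain ⟨t, htW, ht⟩ := not_subset.1 fun h => hWu ((hGc.biUnion hzeros).mono h)
    obtain ⟨H, hH, htH⟩ := hYG (mem_biUnion hT ⟨t, htW, rfl⟩)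
    exact ht (mem_biUnion hH htH)
  · calc #(⋃ T ∈ 𝓕, curve (a T) '' W)
        ≤ #𝓕 * ⨆ T : 𝓕, #(curve (a T) '' W) := mk_biUnion_le _ _
      _ ≤ #𝓕 * ℵ₁ := by
        gcongr
        exact ciSup_le' fun T => by
          simpa [hW] using mk_image_le_lift (f := curve (a T)) (s := W)

theorem exists_not_inHyperplaneIdeal_mk_eq_nonH :
    ∃ Y : Set X, ¬ InHyperplaneIdeal Y ∧ #Y = nonH X := by
  obtain ⟨Y, hY, -⟩ := exists_not_inHyperplaneIdeal_mk_le (dense_univ (X := X))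
    (𝓕 := {T | T.Countable}) (fun T hT => hT) fun S _ hS => ⟨S, hS, subset_rfl⟩
  exact csInf_mem
    (⟨_, Y, hY, rfl⟩ : {c | ∃ Y : Set X, ¬ InHyperplaneIdeal Y ∧ #Y = c}.Nonempty)

theorem densH_le_nonH (hdim : 1 < Module.rank ℝ X) : densH X ≤ nonH X := by
  obtain ⟨Y, hY, hYc⟩ := exists_not_inHyperplaneIdeal_mk_eq_nonH (X := X)
  exact not_lt.1 fun h => hY (inHyperplaneIdeal_of_mk_lt_densH hdim (hYc ▸ h))

theorem nonH_le_cfCtblSubsets_densH (h : ℵ₀ < densH X) :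
    nonH X ≤ cfCtblSubsets (densH X) := by
  obtain ⟨D, hD, hDc⟩ := exists_dense_mk_eq_densH (X := X)
  obtain ⟨𝓕, h𝓕c, h𝓕, h𝓕card⟩ := exists_countable_cofinal_family_mk_le D
  have hDu : ¬ D.Countable := by
    rw [← le_aleph0_iff_set_countable, hDc]
    exact h.not_ge
  have h𝓕u : ℵ₁ ≤ #𝓕 :=
    succ_aleph0 ▸ Order.succ_le_of_lt (aleph0_lt_mk_of_cofinal hDu h𝓕c h𝓕)
  obtain ⟨Y, hY, hYc⟩ := exists_not_inHyperplaneIdeal_mk_le hD h𝓕c h𝓕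
  calc nonH X ≤ #Y := nonH_le_mk hY
    _ ≤ #𝓕 * ℵ₁ := hYc
    _ = #𝓕 := mul_eq_left (aleph0_lt_aleph_one.le.trans h𝓕u) h𝓕u (aleph_pos 1).ne'
    _ ≤ cfCtblSubsets (densH X) := hDc ▸ h𝓕card

theorem densH_lt_nonH_of_cof_eq_aleph0 (hdim : 1 < Module.rank ℝ X)
    (hcof : (densH X).ord.cof = ℵ₀) : densH X < nonH X := by
  refine (densH_le_nonH hdim).lt_of_ne fun heq => ?_
  obtain ⟨Y, hY, hYc⟩ := exists_not_inHyperplaneIdeal_mk_eq_nonH (X := X)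
  rw [← heq] at hYc
  obtain ⟨A, hAU, hA⟩ := exists_iUnion_eq_univ_mk_lt_of_cof_eq_aleph0 (α := Y) (hYc ▸ hcof)
  have hsmall (n : ℕ) : InHyperplaneIdeal (Subtype.val '' A n) :=
    inHyperplaneIdeal_of_mk_lt_densH hdim (mk_image_le.trans_lt (hYc ▸ hA n))
  refine hY ((inHyperplaneIdeal_iUnion hsmall).mono fun y hy => ?_)
  obtain ⟨n, hn⟩ := mem_iUnion.1 (hAU ▸ mem_univ (⟨y, hy⟩ : Y))
  exact mem_iUnion.2 ⟨n, ⟨y, hy⟩, hn, rfl⟩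

end NonH

/-- dens(X) ≤ non(X); if dens(X) is uncountable then non(X) ≤ cf([dens(X)]^ω);
and if cf(dens(X)) = ω then dens(X) < non(X). -/
theorem stmt5 (X : Type u) [NormedAddCommGroup X] [NormedSpace ℝ X] [CompleteSpace X]
    (hdim : 1 < Module.rank ℝ X) :
    densH X ≤ nonH X ∧
      (Cardinal.aleph0 < densH X → nonH X ≤ cfCtblSubsets (densH X)) ∧
      ((densH X).ord.cof = Cardinal.aleph0 → densH X < nonH X) :=
  ⟨densH_le_nonH hdim, nonH_le_cfCtblSubsets_densH, densH_lt_nonH_of_cof_eq_aleph0 hdim⟩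
end
end
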